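/- Let F be a finite simple graph, k ≥ 1, u = (u₁, …, u_k) a k-tuple of vertices of F, A = {u₁, …, u_k}, and let C₁, …, C_K be the CCEs of F induced by A. Assume that every vertex of F outside A is incident to at least one edge. Let G be a simple graph and v = (v₁, …, v_k) a k-tuple of vertices of G satisfying the compatibility condition: for all i, j ∈ [k], u_i = u_j implies v_i = v_j. Then the map sending each graph homomorphism h : F → G with h(u_j) = v_j for all j ∈ [k] to the K-tuple of its restrictions to the edge-induced subgraphs of C₁, …, C_K is a bijection onto the product over i ∈ [K] of the sets of graph homomorphisms from the edge-induced subgraph of C_i to G that send every anchored vertex u_j of C_i to v_j. -/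

import Mathlib

/-- One step of the CCE relation: two edges of `F` share an endpoint outside `A`. -/
def cceStep {V : Type*} (F : SimpleGraph V) (A : Set V)
    (e e' : F.edgeSet) : Prop :=
  ∃ x : V, x ∉ A ∧ x ∈ (e : Sym2 V) ∧ x ∈ (e' : Sym2 V)

/-- The CCE equivalence relation on the edge set of `F` induced by the vertex set `A`. -/
def cceSetoid {V : Type*} (F : SimpleGraph V) (A : Set V) : Setoid F.edgeSet :=
  Relation.EqvGen.setoid (cceStep F A)

/-- The CCEs (connected components of edges) of `F` induced by `A`. -/
def cceClasses {V : Type*} (F : SimpleGraph V) (A : Set V) : Set (Set F.edgeSet) :=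
  Setoid.classes (cceSetoid F A)

/-- The vertex set of the edge-induced subgraph of a set `C` of edges of `F`:
all endpoints of edges in `C`. -/
def cceVerts {V : Type*} (F : SimpleGraph V) (C : Set F.edgeSet) : Set V :=
  {x : V | ∃ e ∈ C, x ∈ (e : Sym2 V)}

/-- The edge-induced subgraph of a set `C` of edges of `F`, as a simple graph whose
vertex type is the set of endpoints of edges in `C`. -/
def cceGraph {V : Type*} (F : SimpleGraph V) (C : Set F.edgeSet) :
    SimpleGraph (cceVerts F C) where
  Adj x y := s((x : V), (y : V)) ∈ Subtype.val '' C
  symm := by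
    constructor
    intro x y h
    rwa [Sym2.eq_swap] at h
  loopless := by
    constructor
    intro x h
    obtain ⟨e, _, he⟩ := h
    exact F.not_isDiag_of_mem_edgeSet e.2 (by rw [he]; exact Sym2.mk_isDiag_iff.2 rfl)

/-- Restriction of a graph homomorphism `h : F →g G` to the edge-induced subgraph
of a set `C` of edges of `F`. -/
def restrictHom {V W : Type*} {F : SimpleGraph V} {G : SimpleGraph W}
    (h : F →g G) (C : Set F.edgeSet) : cceGraph F C →g G where
  toFun x := h x.1
  map_rel' := by
    intro a b hab
    obtain ⟨e, _, he⟩ := hab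
    have hadj : F.Adj a.1 b.1 := F.mem_edgeSet.1 (by rw [← he]; exact e.2)
    exact h.map_rel hadj

/-!
Two edges through a common vertex outside `A` are CCE-equivalent, so a vertex outside `A`
lies in the vertex set of exactly one class, and every such vertex lies in one since it is
incident to an edge. Hence the restrictions of a family of anchored homomorphisms agree
wherever their domains overlap (on `A` they are all pinned by `v`, consistently by the
compatibility condition) and glue to a homomorphism of `F`; conversely a homomorphism is
determined by its values on `A` and its restrictions.
-/

lemma eq_of_mem_cceVerts_of_notMem {V : Type*} {F : SimpleGraph V} {A : Set V}
    {C C' : Set F.edgeSet} (hC : C ∈ cceClasses F A) (hC' : C' ∈ cceClasses F A)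
    {x : V} (hx : x ∉ A) (hxC : x ∈ cceVerts F C) (hxC' : x ∈ cceVerts F C') : C = C' := by
  obtain ⟨e, he, hxe⟩ := hxC
  obtain ⟨e', he', hxe'⟩ := hxC'
  obtain ⟨a, rfl⟩ := hC
  have hr : (cceSetoid F A).r e' e := Relation.EqvGen.rel _ _ ⟨x, hx, hxe', hxe⟩
  have he'a : e' ∈ {y | (cceSetoid F A).r y a} := (cceSetoid F A).trans' hr he
  exact (Setoid.eq_of_mem_classes hC' he' (Setoid.mem_classes _ a) he'a).symm

section Gluing

variable {V W ι κ : Type*} {F : SimpleGraph V} {G : SimpleGraph W} {C : ι → Set F.edgeSet}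

lemma exists_mem_cceVerts (hCcover : ∀ e : F.edgeSet, ∃ i, e ∈ C i) {x : V}
    (hx : ∃ e : F.edgeSet, x ∈ (e : Sym2 V)) : ∃ i, x ∈ cceVerts F (C i) := by
  obtain ⟨e, hxe⟩ := hx
  obtain ⟨i, hi⟩ := hCcover e
  exact ⟨i, e, hi, hxe⟩

lemma hom_ext_of_restrictHom_eq {A : Set V} (hCcover : ∀ e : F.edgeSet, ∃ i, e ∈ C i)
    (hIncident : ∀ x : V, x ∉ A → ∃ e : F.edgeSet, x ∈ (e : Sym2 V)) {h₁ h₂ : F →g G}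
    (hA : ∀ x ∈ A, h₁ x = h₂ x) (hres : ∀ i, restrictHom h₁ (C i) = restrictHom h₂ (C i)) :
    h₁ = h₂ := by
  ext x
  by_cases hx : x ∈ A
  · exact hA x hx
  · obtain ⟨i, hxi⟩ := exists_mem_cceVerts hCcover (hIncident x hx)
    exact DFunLike.congr_fun (hres i) ⟨x, hxi⟩

variable {u : κ → V} {v : κ → W} (hC : ∀ i, C i ∈ cceClasses F (Set.range u))
  (hCinj : Function.Injective C) (hCcover : ∀ e : F.edgeSet, ∃ i, e ∈ C i)
  (hIncident : ∀ x : V, x ∉ Set.range u → ∃ e : F.edgeSet, x ∈ (e : Sym2 V))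
  (hcompat : ∀ i j, u i = u j → v i = v j) (g : ∀ i, cceGraph F (C i) →g G)
  (hg : ∀ i j (hj : u j ∈ cceVerts F (C i)), g i ⟨u j, hj⟩ = v j)
include hC hCinj hCcover hIncident hcompat hg

lemma exists_glued_value (x : V) :
    ∃ w, (∀ j, u j = x → v j = w) ∧ ∀ i (hx : x ∈ cceVerts F (C i)), g i ⟨x, hx⟩ = w := by
  by_cases hx : x ∈ Set.range u
  · obtain ⟨j, rfl⟩ := hx
    exact ⟨v j, fun j' hj' => hcompat j' j hj', fun i hx => hg i j hx⟩
  · obtain ⟨i₀, hx₀⟩ := exists_mem_cceVerts hCcover (hIncident x hx)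
    refine ⟨g i₀ ⟨x, hx₀⟩, fun j hj => absurd ⟨j, hj⟩ hx, fun i hxi => ?_⟩
    obtain rfl : i = i₀ := hCinj (eq_of_mem_cceVerts_of_notMem (hC i) (hC i₀) hx hxi hx₀)
    rfl

lemma exists_hom_restrictHom_eq :
    ∃ h : F →g G, (∀ j, h (u j) = v j) ∧ ∀ i, restrictHom h (C i) = g i := by
  choose f hfu hfg using exists_glued_value hC hCinj hCcover hIncident hcompat g hg
  refine ⟨⟨f, fun {a b} hab => ?_⟩, fun j => (hfu (u j) j rfl).symm, fun i => ?_⟩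
  · obtain ⟨i, hi⟩ := hCcover ⟨s(a, b), hab⟩
    have ha : a ∈ cceVerts F (C i) := ⟨_, hi, Sym2.mem_mk_left a b⟩
    have hb : b ∈ cceVerts F (C i) := ⟨_, hi, Sym2.mem_mk_right a b⟩
    rw [← hfg a i ha, ← hfg b i hb]
    exact (g i).map_rel ⟨_, hi, rfl⟩
  · ext ⟨x, hx⟩
    exact (hfg x i hx).symm

end Gluing

theorem stmt1_general {V W : Type*} (F : SimpleGraph V) (k K : ℕ)
    (u : Fin k → V) (C : Fin K → Set F.edgeSet)
    (hC : ∀ i, C i ∈ cceClasses F (Set.range u))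
    (hCinj : Function.Injective C)
    (hCcover : ∀ e : F.edgeSet, ∃ i, e ∈ C i)
    (hIncident : ∀ x : V, x ∉ Set.range u → ∃ e : F.edgeSet, x ∈ (e : Sym2 V))
    (G : SimpleGraph W) (v : Fin k → W)
    (hcompat : ∀ i j, u i = u j → v i = v j) :
    Function.Bijective
      (fun h : {h : F →g G // ∀ j, h.1 (u j) = v j} =>
        (fun i =>
          (⟨restrictHom h.1 (C i),
            fun j hj => h.2 j⟩ :
            {g : cceGraph F (C i) →g G //
              ∀ (j : Fin k) (hj : u j ∈ cceVerts F (C i)), g.1 ⟨u j, hj⟩ = v j}) :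
          (i : Fin K) → {g : cceGraph F (C i) →g G //
            ∀ (j : Fin k) (hj : u j ∈ cceVerts F (C i)), g.1 ⟨u j, hj⟩ = v j})) := by
  constructor
  · intro h₁ h₂ heq
    refine Subtype.ext (hom_ext_of_restrictHom_eq hCcover hIncident ?_
      fun i => congrArg Subtype.val (congrFun heq i))
    rintro _ ⟨j, rfl⟩
    exact (h₁.2 j).trans (h₂.2 j).symm
  · intro g
    obtain ⟨h, hu, hres⟩ := exists_hom_restrictHom_eq hC hCinj hCcover hIncident hcompat
      (fun i => (g i).1) fun i => (g i).2
    exact ⟨⟨h, hu⟩, funext fun i => Subtype.ext (hres i)⟩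

theorem stmt1 {V W : Type*} [Fintype V] (F : SimpleGraph V) (k K : ℕ) (hk : 1 ≤ k)
    (u : Fin k → V) (C : Fin K → Set F.edgeSet)
    (hC : ∀ i, C i ∈ cceClasses F (Set.range u))
    (hCinj : Function.Injective C)
    (hCcover : ∀ e : F.edgeSet, ∃ i, e ∈ C i)
    (hIncident : ∀ x : V, x ∉ Set.range u → ∃ e : F.edgeSet, x ∈ (e : Sym2 V))
    (G : SimpleGraph W) (v : Fin k → W)
    (hcompat : ∀ i j, u i = u j → v i = v j) :
    Function.Bijective
      (fun h : {h : F →g G // ∀ j, h.1 (u j) = v j} =>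
        (fun i =>
          (⟨restrictHom h.1 (C i),
            fun j hj => h.2 j⟩ :
            {g : cceGraph F (C i) →g G //
              ∀ (j : Fin k) (hj : u j ∈ cceVerts F (C i)), g.1 ⟨u j, hj⟩ = v j}) :
          (i : Fin K) → {g : cceGraph F (C i) →g G //
            ∀ (j : Fin k) (hj : u j ∈ cceVerts F (C i)), g.1 ⟨u j, hj⟩ = v j})) :=
  stmt1_general F k K u C hC hCinj hCcover hIncident G v hcompat
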